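/- Let x ≥ 2 and A, B > 0. If f:ℕ→ℝ_{≥0} is a multiplicative function such that f(p) ≤ A for all primes p and ∑_p ∑_{ℓ≥2} f(p^ℓ)/p^ℓ ≤ B, then there exist constants 0 < K₁ ≤ K₂ depending only on A and B such that K₁·exp(∑_{p≤x} f(p)/p) ≤ ∑_{n≤x} f(n)/n ≤ K₂·exp(∑_{p≤x} f(p)/p). -/

import Mathlib

open scoped Classical

noncomputable section

/-- `Ω n`: the number of prime factors of `n` counted with multiplicity. -/
def bigOmega (n : ℕ) : ℕ := n.primeFactorsList.length

/-- `ω n`: the number of distinct prime factors of `n`. -/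
def smallOmega (n : ℕ) : ℕ := n.primeFactors.card

/-- `ω(n, E)`: the number of distinct prime factors of `n` lying in `E`. -/
def omegaE (E : Set ℕ) (n : ℕ) : ℕ := (n.primeFactors.filter fun p => p ∈ E).card

/-- `Ω(n, E)`: the number of pairs `(p, ℓ)` with `p ∈ E`, `ℓ ≥ 1` and `p ^ ℓ ∣ n`. -/
def bigOmegaE (E : Set ℕ) (n : ℕ) : ℕ :=
  ∑ p ∈ n.primeFactors.filter (fun p => p ∈ E), n.factorization p

/-- The class `𝓜(A₁, A₂)` of nonnegative multiplicative functions. -/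
structure MClass (A₁ : ℝ) (A₂ : ℝ → ℝ) (f : ℕ → ℝ) : Prop where
  nonneg : ∀ n, 0 ≤ f n
  map_one : f 1 = 1
  mult : ∀ m n : ℕ, Nat.Coprime m n → f (m * n) = f m * f n
  le_pow : ∀ n : ℕ, 0 < n → f n ≤ A₁ ^ bigOmega n
  le_eps : ∀ ε : ℝ, 0 < ε → ∀ n : ℕ, 0 < n → f n ≤ A₂ ε * (n : ℝ) ^ ε

/-- The finset of primes `p ≤ x`. -/
def primesUpTo (x : ℝ) : Finset ℕ := (Finset.range (⌊x⌋₊ + 1)).filter Nat.Prime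

/-- `M_f(x, E) = ∑_{p ≤ x, p ∈ E} f(p)/p`. -/
def MfE (f : ℕ → ℝ) (x : ℝ) (E : Set ℕ) : ℝ :=
  ∑ p ∈ (primesUpTo x).filter (fun p => p ∈ E), f p / p

/-- `M_f(x) = ∑_{p ≤ x} f(p)/p`. -/
def Mf (f : ℕ → ℝ) (x : ℝ) : ℝ := ∑ p ∈ primesUpTo x, f p / p

/-- `M_ν(x) = ∑_{p ≤ x} ν(p)/p`. -/
def Mnu (ν : ℕ → ℕ) (x : ℝ) : ℝ := ∑ p ∈ primesUpTo x, (ν p : ℝ) / p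

/-- The sifted set `𝒮` of positive integers `n ≤ x` with `n mod p ∉ ℰ p` for every prime `p`. -/
def sifted (x : ℝ) (ℰ : (p : ℕ) → Set (ZMod p)) : Finset ℕ :=
  (Finset.Icc 1 ⌊x⌋₊).filter fun n => ∀ p : ℕ, p.Prime → ((n : ZMod p) ∉ ℰ p)

/-- The sieve data: each `ℰ p` is a set of `ν p ≤ v` units of `ℤ/pℤ`. -/
structure SiftData (v : ℕ) (ℰ : (p : ℕ) → Set (ZMod p)) (ν : ℕ → ℕ) : Prop where
  finite : ∀ p : ℕ, p.Prime → (ℰ p).Finite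
  unit : ∀ p : ℕ, p.Prime → ∀ a ∈ ℰ p, IsUnit a
  card : ∀ p : ℕ, p.Prime → (ℰ p).ncard = ν p
  le_v : ∀ p : ℕ, p.Prime → ν p ≤ v

/-!
Write `F n = f n / n`. For the upper bound, every `n ≤ x` factors over the primes `p ≤ x` with
exponents at most `x`, so the harmonic sum is at most
`∏_{p ≤ x} ∑_ℓ F(p^ℓ) ≤ ∏_{p ≤ x} exp (F p + ∑_{ℓ ≥ 2} F(p^ℓ)) ≤ e^B exp (∑_{p ≤ x} F p)`.

For the lower bound put `y = x ^ (1 / (8A + 1))`. By the bound `∑_{p ≤ x} log p / p ≤ 4 log x`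
(from Chebyshev's `θ(x) ≤ x log 4` by dyadic splitting), the primes in `(y, x]` add at most
`4A(8A + 1)` to `∑ F p`, and `exp (∑_{p ≤ y} F p) ≤ e^{A²} ∏_{p ≤ y} (1 + F p)` since
`∑ F(p)² ≤ A² ∑ p⁻²`. Expanding the product gives a sum over squarefree `n` with all prime
factors `≤ y`. Rankin's trick with exponent `1 / log y` shows that the terms with `n > x` make up
at most half of it, and the remaining terms belong to the harmonic sum.
-/

open Finset Real

theorem map_prod_of_pairwise_coprime {M : Type*} [CommMonoid M] {F : ℕ → M} (hF1 : F 1 = 1)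
    (hmul : ∀ m n : ℕ, m.Coprime n → F (m * n) = F m * F n) {ι : Type*} (s : Finset ι)
    (g : ι → ℕ) (hs : (s : Set ι).Pairwise fun i j => (g i).Coprime (g j)) :
    F (∏ i ∈ s, g i) = ∏ i ∈ s, F (g i) := by
  classical
  induction s using Finset.induction_on with
  | empty => simpa using hF1
  | insert i s hi ih =>
    rw [coe_insert, Set.pairwise_insert] at hs
    rw [prod_insert hi, prod_insert hi, hmul, ih hs.1]
    exact Nat.Coprime.prod_right fun j hj => (hs.2 j hj (ne_of_mem_of_not_mem hj hi).symm).1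

theorem map_eq_prod_pow_factorization {M : Type*} [CommMonoid M] {F : ℕ → M} (hF1 : F 1 = 1)
    (hmul : ∀ m n : ℕ, m.Coprime n → F (m * n) = F m * F n) {P : Finset ℕ}
    (hP : ∀ p ∈ P, p.Prime) {n : ℕ} (hn : n ≠ 0) (hnP : n.primeFactors ⊆ P) :
    F n = ∏ p ∈ P, F (p ^ n.factorization p) := by
  have hn_eq : n = ∏ p ∈ P, p ^ n.factorization p := by
    refine (Nat.prod_primeFactors_pow_factorization hn).trans (prod_subset hnP fun p _ hp => ?_)
    rw [Finsupp.notMem_support_iff.mp (by simpa using hp), pow_zero]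
  conv_lhs => rw [hn_eq]
  refine map_prod_of_pairwise_coprime hF1 hmul P _ fun p hp q hq hpq => ?_
  exact Nat.Coprime.pow _ _ ((Nat.coprime_primes (hP p hp) (hP q hq)).mpr hpq)

theorem sum_le_prod_sum_pow {F : ℕ → ℝ} (hF0 : ∀ n, 0 ≤ F n) (hF1 : F 1 = 1)
    (hmul : ∀ m n : ℕ, m.Coprime n → F (m * n) = F m * F n) {P N : Finset ℕ}
    (hP : ∀ p ∈ P, p.Prime) (L : ℕ)
    (hN : ∀ n ∈ N, n ≠ 0 ∧ n.primeFactors ⊆ P ∧ ∀ p, n.factorization p ≤ L) :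
    ∑ n ∈ N, F n ≤ ∏ p ∈ P, ∑ ℓ ∈ range (L + 1), F (p ^ ℓ) := by
  let exponents : ℕ → ∀ p ∈ P, ℕ := fun n p _ => n.factorization p
  have h_inj : Set.InjOn exponents N := by
    intro n hn m hm h
    refine Nat.eq_of_factorization_eq (hN n hn).1 (hN m hm).1 fun p => ?_
    by_cases hp : p ∈ P
    · exact congr_fun (congr_fun h p) hp
    · have hvanish {k : ℕ} (hk : k ∈ N) : k.factorization p = 0 :=
        Finsupp.notMem_support_iff.mp fun h' => hp ((hN k hk).2.1 (by simpa using h'))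
      rw [hvanish hn, hvanish hm]
  have h_term : ∀ n ∈ N, F n = ∏ x ∈ P.attach, F (x.1 ^ exponents n x.1 x.2) := fun n hn => by
    rw [prod_attach P fun p => F (p ^ n.factorization p)]
    exact map_eq_prod_pow_factorization hF1 hmul hP (hN n hn).1 (hN n hn).2.1
  rw [prod_sum, sum_congr rfl h_term,
    ← sum_image (f := fun e => ∏ x ∈ P.attach, F (x.1 ^ e x.1 x.2)) h_inj]
  refine sum_le_sum_of_subset_of_nonneg ?_ fun _ _ _ => prod_nonneg fun _ _ => hF0 _
  intro e he
  obtain ⟨n, hn, rfl⟩ := mem_image.mp he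
  exact mem_pi.mpr fun p _ => mem_range.mpr (Nat.lt_succ_of_le ((hN n hn).2.2 p))

theorem sum_powerset_prod_le_sum_Icc {F : ℕ → ℝ} (hF0 : ∀ n, 0 ≤ F n) (hF1 : F 1 = 1)
    (hmul : ∀ m n : ℕ, m.Coprime n → F (m * n) = F m * F n) {Q : Finset ℕ}
    (hQ : ∀ p ∈ Q, p.Prime) (x : ℝ) :
    ∑ S ∈ Q.powerset with ((∏ p ∈ S, p : ℕ) : ℝ) ≤ x, ∏ p ∈ S, F p
      ≤ ∑ n ∈ Icc 1 ⌊x⌋₊, F n := by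
  have hS {S} (hS : S ∈ Q.powerset.filter fun S => ((∏ p ∈ S, p : ℕ) : ℝ) ≤ x) :
      ∀ p ∈ S, p.Prime :=
    fun p hp => hQ p (mem_powerset.mp (mem_filter.mp hS).1 hp)
  have h_term : ∀ S ∈ Q.powerset.filter fun S => ((∏ p ∈ S, p : ℕ) : ℝ) ≤ x,
      ∏ p ∈ S, F p = F (∏ p ∈ S, p) := fun S hS' =>
    (map_prod_of_pairwise_coprime hF1 hmul S id fun p hp q hq =>
      (Nat.coprime_primes (hS hS' p hp) (hS hS' q hq)).mpr).symm
  have h_inj : Set.InjOn (fun S : Finset ℕ => ∏ p ∈ S, p)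
      (Q.powerset.filter fun S => ((∏ p ∈ S, p : ℕ) : ℝ) ≤ x) := by
    intro S hS' T hT' h
    rw [← Nat.primeFactors_prod (hS hS'), ← Nat.primeFactors_prod (hS hT')]
    exact congrArg Nat.primeFactors h
  rw [sum_congr rfl h_term, ← sum_image h_inj]
  refine sum_le_sum_of_subset_of_nonneg ?_ fun _ _ _ => hF0 _
  intro n hn
  obtain ⟨S, hS', rfl⟩ := mem_image.mp hn
  exact mem_Icc.mpr ⟨prod_pos fun p hp => (hS hS' p hp).pos, Nat.le_floor (mem_filter.mp hS').2⟩

theorem exp_le_one_add_mul_exp_sq {t : ℝ} (ht : 0 ≤ t) : exp t ≤ (1 + t) * exp (t ^ 2) := by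
  have h_pos : 0 < 1 - (t - t ^ 2) := by nlinarith
  -- `exp u ≤ (1 - u)⁻¹` at `u = t - t²`, and `(1 + t) (1 - t + t²) = 1 + t³ ≥ 1`
  have h_inv : exp (t - t ^ 2) * (1 - (t - t ^ 2)) ≤ 1 := by
    calc exp (t - t ^ 2) * (1 - (t - t ^ 2)) ≤ exp (t - t ^ 2) * exp (-(t - t ^ 2)) := by
          gcongr; linarith [add_one_le_exp (-(t - t ^ 2))]
      _ = 1 := by rw [← exp_add, add_neg_cancel, exp_zero]
  have h_main : exp (t - t ^ 2) ≤ 1 + t :=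
    le_of_mul_le_mul_right (by nlinarith [pow_nonneg ht 3]) h_pos
  calc exp t = exp (t - t ^ 2) * exp (t ^ 2) := by rw [← exp_add, sub_add_cancel]
    _ ≤ (1 + t) * exp (t ^ 2) := by gcongr

theorem exp_sum_le_exp_sum_sq_mul_prod {ι : Type*} (s : Finset ι) {g : ι → ℝ}
    (hg : ∀ i ∈ s, 0 ≤ g i) :
    exp (∑ i ∈ s, g i) ≤ exp (∑ i ∈ s, g i ^ 2) * ∏ i ∈ s, (1 + g i) := by
  rw [exp_sum, exp_sum, ← prod_mul_distrib]
  exact prod_le_prod (fun i _ => (exp_pos _).le) fun i hi => by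
    rw [mul_comm]; exact exp_le_one_add_mul_exp_sq (hg i hi)

theorem one_add_mul_exp_le {a u : ℝ} (ha : 0 ≤ a) (hu0 : 0 ≤ u) (hu1 : u ≤ 1) :
    1 + a * exp u ≤ (1 + a) * exp (2 * a * u) := by
  have h_exp : exp u - 1 ≤ 2 * u := by
    have := abs_exp_sub_one_le (x := u) (by rwa [abs_of_nonneg hu0])
    rw [abs_of_nonneg hu0] at this
    exact (le_abs_self _).trans this
  have h_lin : 1 + 2 * a * u ≤ exp (2 * a * u) := by linarith [add_one_le_exp (2 * a * u)]
  calc 1 + a * exp u ≤ (1 + a) * (1 + 2 * a * u) := by nlinarith [mul_nonneg ha hu0]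
    _ ≤ (1 + a) * exp (2 * a * u) := by gcongr

theorem sum_inv_sq_le_one {s : Finset ℕ} (hs : ∀ n ∈ s, 2 ≤ n) :
    ∑ n ∈ s, ((n : ℝ) ^ 2)⁻¹ ≤ 1 := by
  have h_sub : s ⊆ Ioo 1 (s.sup id + 1) := fun n hn =>
    mem_Ioo.mpr ⟨hs n hn, Nat.lt_succ_of_le (le_sup (f := id) hn)⟩
  calc ∑ n ∈ s, ((n : ℝ) ^ 2)⁻¹ ≤ ∑ n ∈ Ioo 1 (s.sup id + 1), ((n : ℝ) ^ 2)⁻¹ :=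
        sum_le_sum_of_subset_of_nonneg h_sub fun _ _ _ => by positivity
    _ ≤ 2 / ((1 : ℕ) + 1) := sum_Ioo_inv_sq_le 1 _
    _ = 1 := by norm_num

theorem primesUpTo_eq_primesLE (x : ℝ) : primesUpTo x = Nat.primesLE ⌊x⌋₊ := by
  ext p
  simp [primesUpTo, Nat.mem_primesLE, and_comm]

theorem mem_primesUpTo {x : ℝ} (hx : 0 ≤ x) {p : ℕ} :
    p ∈ primesUpTo x ↔ p.Prime ∧ (p : ℝ) ≤ x := by
  rw [primesUpTo_eq_primesLE, Nat.mem_primesLE, Nat.le_floor_iff hx, and_comm]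

theorem primesUpTo_mono {x y : ℝ} (hxy : x ≤ y) : primesUpTo x ⊆ primesUpTo y := by
  rw [primesUpTo_eq_primesLE, primesUpTo_eq_primesLE]
  exact Nat.primesLE_mono (Nat.floor_mono hxy)

theorem sum_primesLE_sdiff_half_log_div_le {m : ℕ} (hm : m ≠ 0) :
    ∑ p ∈ Nat.primesLE m \ Nat.primesLE (m / 2), log p / p ≤ 4 * log 2 := by
  have hm0 : (0 : ℝ) < m := by positivity
  calc ∑ p ∈ Nat.primesLE m \ Nat.primesLE (m / 2), log p / p
      ≤ ∑ p ∈ Nat.primesLE m \ Nat.primesLE (m / 2), 2 * log p / m := by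
        refine sum_le_sum fun p hp => ?_
        obtain ⟨hpm, hph⟩ := mem_sdiff.mp hp
        have hp : (m : ℝ) ≤ 2 * p := by
          have : ¬ p ≤ m / 2 := fun h => hph (Nat.mem_primesLE.mpr ⟨h, (Nat.mem_primesLE.mp hpm).2⟩)
          exact_mod_cast (by omega : m ≤ 2 * p)
        rw [← mul_div_mul_left (log p) (p : ℝ) two_ne_zero]
        exact div_le_div_of_nonneg_left (by positivity) hm0 hp
      _ ≤ 2 * (∑ p ∈ Nat.primesLE m, log p) / m := by
          rw [← sum_div, ← mul_sum]
          refine div_le_div_of_nonneg_right (mul_le_mul_of_nonneg_left ?_ zero_le_two) hm0.le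
          exact sum_le_sum_of_subset_of_nonneg sdiff_subset fun p _ _ => log_natCast_nonneg p
      _ ≤ 2 * (log 4 * m) / m := by
          rw [← Chebyshev.theta_eq_sum_primesLE_log]
          gcongr
          exact Chebyshev.theta_le_log4_mul_x (Nat.cast_nonneg m)
      _ = 4 * log 2 := by
          rw [show (4 : ℝ) = 2 ^ 2 by norm_num, log_pow]
          field_simp
          ring

theorem sum_primesLE_log_div_le {m : ℕ} (hm : 1 ≤ m) :
    ∑ p ∈ Nat.primesLE m, log p / p ≤ 4 * log m := by
  induction m using Nat.strong_induction_on with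
  | _ m ih =>
  rcases hm.eq_or_lt with rfl | hm2
  · simp [show Nat.primesLE 1 = ∅ by decide]
  have h_half : (0 : ℝ) < (m / 2 : ℕ) := by exact_mod_cast (by omega : 0 < m / 2)
  have h_log : log ↑(m / 2) + log 2 ≤ log m := by
    rw [← log_mul h_half.ne' (by norm_num)]
    exact log_le_log (by positivity) (by exact_mod_cast (by omega : m / 2 * 2 ≤ m))
  rw [← sum_sdiff (Nat.primesLE_mono (Nat.div_le_self m 2))]
  linarith [ih (m / 2) (by omega) (by omega), sum_primesLE_sdiff_half_log_div_le (by omega : m ≠ 0)]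

theorem sum_primesUpTo_log_div_le {x : ℝ} (hx : 1 ≤ x) :
    ∑ p ∈ primesUpTo x, log p / p ≤ 4 * log x := by
  have hx1 : 1 ≤ ⌊x⌋₊ := Nat.le_floor (by exact_mod_cast hx)
  rw [primesUpTo_eq_primesLE]
  calc _ ≤ 4 * log ⌊x⌋₊ := sum_primesLE_log_div_le hx1
    _ ≤ 4 * log x := by
      gcongr
      exact Nat.floor_le (by linarith)

theorem sum_primesUpTo_sdiff_inv_le {x y : ℝ} (hx : 1 ≤ x) (hy : 1 < y) :
    ∑ p ∈ primesUpTo x \ primesUpTo y, (p : ℝ)⁻¹ ≤ 4 * log x / log y := by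
  have hlogy : 0 < log y := log_pos hy
  calc ∑ p ∈ primesUpTo x \ primesUpTo y, (p : ℝ)⁻¹
      ≤ ∑ p ∈ primesUpTo x \ primesUpTo y, (log p / p) / log y := by
        refine sum_le_sum fun p hp => ?_
        obtain ⟨hpx, hpy⟩ := mem_sdiff.mp hp
        have hp_prime := ((mem_primesUpTo (by linarith)).mp hpx).1
        have hyp : y < p := by
          by_contra! h
          exact hpy ((mem_primesUpTo (by linarith)).mpr ⟨hp_prime, h⟩)
        have hp0 : (0 : ℝ) < p := by exact_mod_cast hp_prime.pos
        calc (p : ℝ)⁻¹ = 1 * (p : ℝ)⁻¹ := (one_mul _).symm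
          _ ≤ (log p / log y) * (p : ℝ)⁻¹ := by
            gcongr
            rw [one_le_div hlogy]
            exact log_le_log (by linarith) hyp.le
          _ = (log p / p) / log y := by ring
    _ = (∑ p ∈ primesUpTo x \ primesUpTo y, log p / p) / log y := by rw [sum_div]
    _ ≤ (∑ p ∈ primesUpTo x, log p / p) / log y :=
        div_le_div_of_nonneg_right (sum_le_sum_of_subset_of_nonneg sdiff_subset
          fun p _ _ => div_nonneg (log_natCast_nonneg p) (Nat.cast_nonneg p)) hlogy.le
    _ ≤ 4 * log x / log y := by gcongr; exact sum_primesUpTo_log_div_le hx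

theorem sum_primesUpTo_le_add {F : ℕ → ℝ} {A x y : ℝ} (hFA : ∀ p : ℕ, p.Prime → F p ≤ A / p)
    (hA : 0 ≤ A) (hx : 1 ≤ x) (hy : 1 < y) (hyx : y ≤ x) :
    ∑ p ∈ primesUpTo x, F p ≤ ∑ p ∈ primesUpTo y, F p + 4 * A * (log x / log y) := by
  rw [← sum_sdiff (primesUpTo_mono hyx), add_comm]
  gcongr
  calc ∑ p ∈ primesUpTo x \ primesUpTo y, F p ≤ ∑ p ∈ primesUpTo x \ primesUpTo y, A * (p : ℝ)⁻¹ :=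
        sum_le_sum fun p hp => (hFA p ((mem_primesUpTo (by linarith)).mp
          (mem_sdiff.mp hp).1).1).trans_eq (div_eq_mul_inv _ _)
    _ ≤ A * (4 * log x / log y) := by
        rw [← mul_sum]
        exact mul_le_mul_of_nonneg_left (sum_primesUpTo_sdiff_inv_le hx hy) hA
    _ = 4 * A * (log x / log y) := by ring

theorem exp_sum_primesUpTo_le_mul_prod {F : ℕ → ℝ} {A : ℝ} (hF0 : ∀ n, 0 ≤ F n)
    (hFA : ∀ p : ℕ, p.Prime → F p ≤ A / p) (y : ℝ) :
    exp (∑ p ∈ primesUpTo y, F p) ≤ exp (A ^ 2) * ∏ p ∈ primesUpTo y, (1 + F p) := by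
  have hprime {p} (hp : p ∈ primesUpTo y) : p.Prime := (mem_filter.mp hp).2
  have h_sq : ∑ p ∈ primesUpTo y, F p ^ 2 ≤ A ^ 2 := by
    calc ∑ p ∈ primesUpTo y, F p ^ 2 ≤ ∑ p ∈ primesUpTo y, A ^ 2 * ((p : ℝ) ^ 2)⁻¹ := by
          refine sum_le_sum fun p hp => ?_
          rw [← div_eq_mul_inv, ← div_pow]
          exact pow_le_pow_left₀ (hF0 p) (hFA p (hprime hp)) 2
      _ ≤ A ^ 2 * 1 := by
          rw [← mul_sum]
          gcongr
          exact sum_inv_sq_le_one fun p hp => (hprime hp).two_le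
      _ = A ^ 2 := mul_one _
  calc exp (∑ p ∈ primesUpTo y, F p)
      ≤ exp (∑ p ∈ primesUpTo y, F p ^ 2) * ∏ p ∈ primesUpTo y, (1 + F p) :=
        exp_sum_le_exp_sum_sq_mul_prod _ fun p _ => hF0 p
    _ ≤ exp (A ^ 2) * ∏ p ∈ primesUpTo y, (1 + F p) := by
        gcongr
        exact prod_nonneg fun p _ => by have := hF0 p; positivity

theorem sum_powerset_filter_lt_le {Q : Finset ℕ} {g : ℕ → ℝ} (hg : ∀ p ∈ Q, 0 ≤ g p) {X σ : ℝ}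
    (hX : 0 < X) (hσ : 0 ≤ σ) :
    ∑ S ∈ Q.powerset with X < ((∏ p ∈ S, p : ℕ) : ℝ), ∏ p ∈ S, g p
      ≤ X ^ (-σ) * ∏ p ∈ Q, (1 + g p * (p : ℝ) ^ σ) := by
  have hgS {S} (hS : S ∈ Q.powerset) : ∀ p ∈ S, 0 ≤ g p := fun p hp => hg p (mem_powerset.mp hS hp)
  rw [prod_one_add, mul_sum]
  calc ∑ S ∈ Q.powerset with X < ((∏ p ∈ S, p : ℕ) : ℝ), ∏ p ∈ S, g p
      ≤ ∑ S ∈ Q.powerset with X < ((∏ p ∈ S, p : ℕ) : ℝ),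
          X ^ (-σ) * ∏ p ∈ S, g p * (p : ℝ) ^ σ := by
        refine sum_le_sum fun S hS => ?_
        obtain ⟨hSQ, hXS⟩ := mem_filter.mp hS
        have h_one : 1 ≤ X ^ (-σ) * ((∏ p ∈ S, p : ℕ) : ℝ) ^ σ := by
          rw [rpow_neg hX.le, inv_mul_eq_div, one_le_div (rpow_pos_of_pos hX σ)]
          exact rpow_le_rpow hX.le hXS.le hσ
        calc ∏ p ∈ S, g p ≤ (X ^ (-σ) * ((∏ p ∈ S, p : ℕ) : ℝ) ^ σ) * ∏ p ∈ S, g p :=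
              le_mul_of_one_le_left (prod_nonneg (hgS hSQ)) h_one
          _ = X ^ (-σ) * ∏ p ∈ S, g p * (p : ℝ) ^ σ := by
              rw [Nat.cast_prod, ← finsetProd_rpow _ _ fun p _ => Nat.cast_nonneg p,
                prod_mul_distrib, mul_assoc, mul_comm (∏ p ∈ S, (p : ℝ) ^ σ)]
    _ ≤ ∑ S ∈ Q.powerset, X ^ (-σ) * ∏ p ∈ S, g p * (p : ℝ) ^ σ :=
        sum_le_sum_of_subset_of_nonneg (filter_subset _ _) fun S hS _ =>
          mul_nonneg (rpow_nonneg hX.le _) (prod_nonneg fun p hp =>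
            mul_nonneg (hgS hS p hp) (rpow_nonneg (Nat.cast_nonneg p) _))

theorem prod_one_add_mul_rpow_le {F : ℕ → ℝ} {A y : ℝ} (hF0 : ∀ n, 0 ≤ F n)
    (hFA : ∀ p : ℕ, p.Prime → F p ≤ A / p) (hA : 0 ≤ A) (hy : 1 < y) :
    ∏ p ∈ primesUpTo y, (1 + F p * (p : ℝ) ^ (log y)⁻¹)
      ≤ exp (8 * A) * ∏ p ∈ primesUpTo y, (1 + F p) := by
  have hlogy : 0 < log y := log_pos hy
  set σ := (log y)⁻¹
  have h_factor : ∀ p ∈ primesUpTo y,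
      1 + F p * (p : ℝ) ^ σ ≤ (1 + F p) * exp (2 * F p * (σ * log p)) := by
    intro p hp
    obtain ⟨hp_prime, hpy⟩ := (mem_primesUpTo (by linarith)).mp hp
    have hp0 : (0 : ℝ) < p := by exact_mod_cast hp_prime.pos
    rw [rpow_def_of_pos hp0, mul_comm (log (p : ℝ))]
    refine one_add_mul_exp_le (hF0 p) (by positivity) ?_
    rw [inv_mul_le_one₀ hlogy]
    exact log_le_log hp0 hpy
  have h_exponent : ∑ p ∈ primesUpTo y, 2 * F p * (σ * log p) ≤ 8 * A := by
    calc ∑ p ∈ primesUpTo y, 2 * F p * (σ * log p)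
        ≤ ∑ p ∈ primesUpTo y, 2 * σ * A * (log p / p) := by
          refine sum_le_sum fun p hp => ?_
          have hlogp := log_natCast_nonneg p
          calc 2 * F p * (σ * log p) = 2 * σ * log p * F p := by ring
            _ ≤ 2 * σ * log p * (A / p) := by
                gcongr
                exact hFA p ((mem_primesUpTo (by linarith)).mp hp).1
            _ = 2 * σ * A * (log p / p) := by ring
      _ = 2 * σ * A * ∑ p ∈ primesUpTo y, log p / p := by rw [mul_sum]
      _ ≤ 2 * σ * A * (4 * log y) := by
          gcongr
          exact sum_primesUpTo_log_div_le hy.le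
      _ = 8 * A * (σ * log y) := by ring
      _ = 8 * A := by rw [inv_mul_cancel₀ hlogy.ne', mul_one]
  calc ∏ p ∈ primesUpTo y, (1 + F p * (p : ℝ) ^ σ)
      ≤ ∏ p ∈ primesUpTo y, (1 + F p) * exp (2 * F p * (σ * log p)) :=
        prod_le_prod (fun p _ => by have := hF0 p; positivity) h_factor
    _ = exp (∑ p ∈ primesUpTo y, 2 * F p * (σ * log p)) * ∏ p ∈ primesUpTo y, (1 + F p) := by
        rw [prod_mul_distrib, exp_sum, mul_comm]
    _ ≤ exp (8 * A) * ∏ p ∈ primesUpTo y, (1 + F p) := by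
        gcongr
        exact prod_nonneg fun p _ => by have := hF0 p; positivity

theorem prod_one_add_le_two_mul_sum_powerset {F : ℕ → ℝ} {A x y : ℝ} (hF0 : ∀ n, 0 ≤ F n)
    (hFA : ∀ p : ℕ, p.Prime → F p ≤ A / p) (hA : 0 ≤ A) (hx : 0 < x) (hy : 1 < y)
    (hxy : (8 * A + 1) * log y ≤ log x) :
    ∏ p ∈ primesUpTo y, (1 + F p)
      ≤ 2 * ∑ S ∈ (primesUpTo y).powerset with ((∏ p ∈ S, p : ℕ) : ℝ) ≤ x, ∏ p ∈ S, F p := by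
  have hlogy : 0 < log y := log_pos hy
  have h_prod_nonneg : 0 ≤ ∏ p ∈ primesUpTo y, (1 + F p) :=
    prod_nonneg fun p _ => by have := hF0 p; positivity
  -- the factor by which Rankin's trick with `σ = 1 / log y` shrinks the terms with `∏ S > x`
  have h_decay : x ^ (-(log y)⁻¹) * exp (8 * A) ≤ 1 / 2 := by
    rw [rpow_def_of_pos hx, ← exp_add]
    refine le_trans (exp_le_exp.mpr ?_) exp_neg_one_lt_half.le
    have : 8 * A + 1 ≤ log x / log y := (le_div_iff₀ hlogy).mpr hxy
    rw [mul_neg, ← div_eq_mul_inv]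
    linarith
  have h_large : ∑ S ∈ (primesUpTo y).powerset with ¬ ((∏ p ∈ S, p : ℕ) : ℝ) ≤ x, ∏ p ∈ S, F p
      ≤ 1 / 2 * ∏ p ∈ primesUpTo y, (1 + F p) := by
    simp only [not_le]
    calc _ ≤ x ^ (-(log y)⁻¹) * ∏ p ∈ primesUpTo y, (1 + F p * (p : ℝ) ^ (log y)⁻¹) :=
          sum_powerset_filter_lt_le (fun p _ => hF0 p) hx (inv_nonneg.mpr hlogy.le)
      _ ≤ x ^ (-(log y)⁻¹) * (exp (8 * A) * ∏ p ∈ primesUpTo y, (1 + F p)) := by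
          gcongr
          exact prod_one_add_mul_rpow_le hF0 hFA hA hy
      _ ≤ 1 / 2 * ∏ p ∈ primesUpTo y, (1 + F p) := by
          rw [← mul_assoc]; gcongr
  have h_split : ∏ p ∈ primesUpTo y, (1 + F p)
      = ∑ S ∈ (primesUpTo y).powerset with ((∏ p ∈ S, p : ℕ) : ℝ) ≤ x, ∏ p ∈ S, F p
        + ∑ S ∈ (primesUpTo y).powerset with ¬ ((∏ p ∈ S, p : ℕ) : ℝ) ≤ x, ∏ p ∈ S, F p := by
    rw [prod_one_add, sum_filter_add_sum_filter_not]
  linarith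

theorem exp_sum_primesUpTo_le_mul_sum_Icc {F : ℕ → ℝ} {A x : ℝ} (hF0 : ∀ n, 0 ≤ F n)
    (hF1 : F 1 = 1) (hmul : ∀ m n : ℕ, m.Coprime n → F (m * n) = F m * F n)
    (hFA : ∀ p : ℕ, p.Prime → F p ≤ A / p) (hA : 0 ≤ A) (hx : 1 < x) :
    exp (∑ p ∈ primesUpTo x, F p)
      ≤ 2 * exp (A ^ 2 + 4 * A * (8 * A + 1)) * ∑ n ∈ Icc 1 ⌊x⌋₊, F n := by
  -- `y = x ^ (1 / k)`; `k = 8A + 1` beats the factor `e^{8A}` of Rankin's trick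
  set k := 8 * A + 1
  have hk : 1 ≤ k := by linarith
  set y := exp (log x / k)
  have hlogx : 0 < log x := log_pos hx
  have hlogy : log y = log x / k := log_exp _
  have hy : 1 < y := one_lt_exp_iff.mpr (by positivity)
  have hyx : y ≤ x := by
    rw [← exp_log (by linarith : 0 < x)]
    exact exp_le_exp.mpr (div_le_self hlogx.le hk)
  have hratio : log x / log y = k := by rw [hlogy]; field_simp
  calc exp (∑ p ∈ primesUpTo x, F p)
      ≤ exp (∑ p ∈ primesUpTo y, F p + 4 * A * k) := by
        rw [← hratio]
        exact exp_le_exp.mpr (sum_primesUpTo_le_add hFA hA hx.le hy hyx)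
    _ = exp (4 * A * k) * exp (∑ p ∈ primesUpTo y, F p) := by rw [exp_add, mul_comm]
    _ ≤ exp (4 * A * k) * (exp (A ^ 2) * ∏ p ∈ primesUpTo y, (1 + F p)) := by
        gcongr
        exact exp_sum_primesUpTo_le_mul_prod hF0 hFA y
    _ ≤ exp (4 * A * k) * (exp (A ^ 2) *
          (2 * ∑ S ∈ (primesUpTo y).powerset with ((∏ p ∈ S, p : ℕ) : ℝ) ≤ x, ∏ p ∈ S, F p)) := by
        gcongr
        exact prod_one_add_le_two_mul_sum_powerset hF0 hFA hA (by linarith) hy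
          (by rw [hlogy, mul_div_cancel₀ _ (by positivity : k ≠ 0)])
    _ ≤ exp (4 * A * k) * (exp (A ^ 2) * (2 * ∑ n ∈ Icc 1 ⌊x⌋₊, F n)) := by
        gcongr
        exact sum_powerset_prod_le_sum_Icc hF0 hF1 hmul (fun p hp => (mem_filter.mp hp).2) x
    _ = 2 * exp (A ^ 2 + 4 * A * k) * ∑ n ∈ Icc 1 ⌊x⌋₊, F n := by rw [exp_add]; ring

theorem sum_Icc_le_exp_mul_exp {F : ℕ → ℝ} {B x : ℝ} (hF0 : ∀ n, 0 ≤ F n) (hF1 : F 1 = 1)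
    (hmul : ∀ m n : ℕ, m.Coprime n → F (m * n) = F m * F n)
    (hB : ∑ p ∈ primesUpTo x, ∑ ℓ ∈ Icc 2 ⌊x⌋₊, F (p ^ ℓ) ≤ B) :
    ∑ n ∈ Icc 1 ⌊x⌋₊, F n ≤ exp B * exp (∑ p ∈ primesUpTo x, F p) := by
  set M := ⌊x⌋₊
  have hP : ∀ p ∈ primesUpTo x, p.Prime ∧ p ≤ M := fun p hp => by
    rw [primesUpTo_eq_primesLE, Nat.mem_primesLE] at hp
    exact hp.symm
  have hN : ∀ n ∈ Icc 1 M, n ≠ 0 ∧ n.primeFactors ⊆ primesUpTo x ∧ ∀ p, n.factorization p ≤ M := by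
    intro n hn
    obtain ⟨hn1, hnM⟩ := mem_Icc.mp hn
    refine ⟨by omega, fun p hp => ?_, fun p => (Nat.factorization_lt p (by omega)).le.trans hnM⟩
    rw [primesUpTo_eq_primesLE, Nat.mem_primesLE]
    exact ⟨(Nat.le_of_mem_primeFactors hp).trans hnM, Nat.prime_of_mem_primeFactors hp⟩
  have h_local : ∀ p ∈ primesUpTo x, ∑ ℓ ∈ range (M + 1), F (p ^ ℓ)
      = 1 + (F p + ∑ ℓ ∈ Icc 2 M, F (p ^ ℓ)) := by
    intro p hp
    have h2M : 2 ≤ M + 1 := by linarith [(hP p hp).1.two_le, (hP p hp).2]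
    rw [← sum_range_add_sum_Ico _ h2M, Ico_add_one_right_eq_Icc]
    simp [sum_range_succ, hF1, add_assoc]
  calc ∑ n ∈ Icc 1 M, F n ≤ ∏ p ∈ primesUpTo x, ∑ ℓ ∈ range (M + 1), F (p ^ ℓ) :=
        sum_le_prod_sum_pow hF0 hF1 hmul (fun p hp => (hP p hp).1) M hN
    _ = ∏ p ∈ primesUpTo x, (1 + (F p + ∑ ℓ ∈ Icc 2 M, F (p ^ ℓ))) := prod_congr rfl h_local
    _ ≤ exp (∑ p ∈ primesUpTo x, (F p + ∑ ℓ ∈ Icc 2 M, F (p ^ ℓ))) :=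
        prod_one_add_le_exp_sum _ fun p => add_nonneg (hF0 p) (sum_nonneg fun _ _ => hF0 _)
    _ ≤ exp (∑ p ∈ primesUpTo x, F p + B) := by
        rw [sum_add_distrib]
        gcongr
    _ = exp B * exp (∑ p ∈ primesUpTo x, F p) := by rw [exp_add, mul_comm]

/-- **Lemma 2.1 (harmonic means of nonnegative multiplicative functions).**
If `f ≥ 0` is multiplicative, `f(p) ≤ A` on primes and
`∑_p ∑_{ℓ ≥ 2} f(p^ℓ)/p^ℓ ≤ B`, then `∑_{n ≤ x} f(n)/n ≍_{A,B} exp(∑_{p ≤ x} f(p)/p)`. -/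
theorem harmonic_mean_multiplicative (A B : ℝ) (hA : 0 < A) (hB : 0 < B) :
    ∃ K₁ K₂ : ℝ, 0 < K₁ ∧ K₁ ≤ K₂ ∧
      ∀ (x : ℝ) (f : ℕ → ℝ),
        2 ≤ x →
        (∀ n, 0 ≤ f n) → f 1 = 1 →
        (∀ m n : ℕ, Nat.Coprime m n → f (m * n) = f m * f n) →
        (∀ p : ℕ, p.Prime → f p ≤ A) →
        (∀ P L : ℕ, ∑ p ∈ (Finset.range P).filter Nat.Prime,
            ∑ ℓ ∈ Finset.Icc 2 L, f (p ^ ℓ) / (p : ℝ) ^ ℓ ≤ B) →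
        K₁ * Real.exp (Mf f x) ≤ ∑ n ∈ Finset.Icc 1 ⌊x⌋₊, f n / n ∧
          ∑ n ∈ Finset.Icc 1 ⌊x⌋₊, f n / n ≤ K₂ * Real.exp (Mf f x) := by
  refine ⟨(2 * exp (A ^ 2 + 4 * A * (8 * A + 1)))⁻¹, exp B, by positivity, ?_, ?_⟩
  · refine (inv_le_one_of_one_le₀ ?_).trans (one_le_exp hB.le)
    nlinarith [one_le_exp (by positivity : 0 ≤ A ^ 2 + 4 * A * (8 * A + 1))]
  intro x f hx hf0 hf1 hmul hfA htail
  set F : ℕ → ℝ := fun n => f n / n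
  have hF0 : ∀ n, 0 ≤ F n := fun n => div_nonneg (hf0 n) n.cast_nonneg
  have hF1 : F 1 = 1 := by simp [F, hf1]
  have hFmul : ∀ m n : ℕ, m.Coprime n → F (m * n) = F m * F n := fun m n h => by
    simp only [F, hmul m n h, Nat.cast_mul, mul_div_mul_comm]
  have hFA : ∀ p : ℕ, p.Prime → F p ≤ A / p := fun p hp =>
    div_le_div_of_nonneg_right (hfA p hp) p.cast_nonneg
  constructor
  · rw [inv_mul_le_iff₀ (by positivity)]
    exact exp_sum_primesUpTo_le_mul_sum_Icc hF0 hF1 hFmul hFA hA.le (by linarith)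
  · refine sum_Icc_le_exp_mul_exp hF0 hF1 hFmul ?_
    simp only [Nat.cast_pow]
    exact htail (⌊x⌋₊ + 1) ⌊x⌋₊
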